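/- arXiv:0908.3628 — 3 statements merged into one kernel-verified Lean document; each statement's English description precedes it below -/
import Mathlib

section
/- In the nilCoxeter algebra of W_n, the elements A_i(t) = (1 + t u_{n-1})(1 + t u_{n-2})···(1 + t u_i) satisfy A_i(s) A_i(t) = A_i(t) A_i(s) for all commuting indeterminates s, t and all indices 1 ≤ i ≤ n-1. -/
open Equiv

attribute [local instance] Classical.propDecidable

noncomputable section

namespace Giambelli

/-- The simple reflection `s_i` of the (infinite) hyperoctahedral group, realized
inside `Equiv.Perm ℤ`: `s_0` is the sign change of the first entry, and `s_i`
(`i ≥ 1`) swaps the entries in positions `i` and `i+1`. -/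
def wS (i : ℕ) : Equiv.Perm ℤ :=
  if i = 0 then Equiv.swap 1 (-1)
  else Equiv.swap (i : ℤ) ((i : ℤ) + 1) * Equiv.swap (-(i : ℤ)) (-((i : ℤ) + 1))

/-- `f` is a signed permutation: `f(-i) = -f(i)`. -/
def IsOddPerm (f : Equiv.Perm ℤ) : Prop := ∀ i : ℤ, f (-i) = - f i

/-- `f` moves only entries of absolute value at most `n`. -/
def SuppLe (n : ℕ) (f : Equiv.Perm ℤ) : Prop := ∀ i : ℤ, (n : ℤ) < |i| → f i = i

/-- Membership in the hyperoctahedral group `W_n`. -/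
def InWn (n : ℕ) (f : Equiv.Perm ℤ) : Prop := IsOddPerm f ∧ SuppLe n f

/-- Membership in `W_∞ = ∪_n W_n`. -/
def InWinf (f : Equiv.Perm ℤ) : Prop := IsOddPerm f ∧ ∃ n : ℕ, SuppLe n f

/-- The Coxeter length: the least length of a word in the `s_i` representing `f`. -/
def len (f : Equiv.Perm ℤ) : ℕ :=
  sInf {m : ℕ | ∃ l : List ℕ, l.length = m ∧ (l.map wS).prod = f}

/-- `f` has a descent at position `p ≥ 0`, where by convention `w_0 = 0`. -/
def Descent (f : Equiv.Perm ℤ) (p : ℕ) : Prop :=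
  f ((p : ℤ) + 1) < (if p = 0 then 0 else f (p : ℤ))

/-- `f` is increasing up to `k`: it has no descent at any position `< k`. -/
def IncUpTo (k : ℕ) (f : Equiv.Perm ℤ) : Prop := ∀ p : ℕ, p < k → ¬ Descent f p

/-- `f` is `k`-Grassmannian: `ℓ(f s_i) = ℓ(f) + 1` for all `i ≠ k`. -/
def kGrass (k : ℕ) (f : Equiv.Perm ℤ) : Prop :=
  ∀ i : ℕ, i ≠ k → len (f * wS i) = len f + 1

/-- The reflection `t_{ij}`, swapping the entries in positions `i` and `j`. -/
def tt (i j : ℕ) : Equiv.Perm ℤ :=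
  Equiv.swap (i : ℤ) (j : ℤ) * Equiv.swap (-(i : ℤ)) (-(j : ℤ))

/-- The reflection `t̄_{ij}`, swapping and negating the entries in positions `i`,`j`
    (negating the entry in position `i` when `i = j`). -/
def tb (i j : ℕ) : Equiv.Perm ℤ :=
  if i = j then Equiv.swap (i : ℤ) (-(i : ℤ))
  else Equiv.swap (i : ℤ) (-(j : ℤ)) * Equiv.swap (j : ℤ) (-(i : ℤ))

/-- The transition set `Φ(w) = Φ₁(w) ∪ Φ₂(w)` attached to `w` with last descent `r`
and `s` maximal such that `w_s < w_r`. -/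
def Phi (w : Equiv.Perm ℤ) (r s : ℕ) : Set (Equiv.Perm ℤ) :=
  {v | ∃ i : ℕ, 1 ≤ i ∧ i < r ∧ len (w * tt r s * tt i r) = len w ∧ v = w * tt r s * tt i r} ∪
  {v | ∃ i : ℕ, 1 ≤ i ∧ len (w * tt r s * tb i r) = len w ∧ v = w * tt r s * tb i r}

/-- The last descent position of `f`. -/
def lastDescent (f : Equiv.Perm ℤ) : ℕ := sSup {p : ℕ | Descent f p}

/-- `max { i > r | w_i < w_r }`. -/
def maxS (f : Equiv.Perm ℤ) (r : ℕ) : ℕ := sSup {i : ℕ | r < i ∧ f (i : ℤ) < f (r : ℤ)}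

/-- A terminal node of the `k`-transition tree: `w = 1` or the last descent of `w` is `k`. -/
def Terminal (k : ℕ) (w : Equiv.Perm ℤ) : Prop := w = 1 ∨ lastDescent w = k

/-- The edge (parent-to-child) relation of the `k`-transition tree `T^k`. -/
def StepT (k : ℕ) (w v : Equiv.Perm ℤ) : Prop :=
  ¬ Terminal k w ∧ v ∈ Phi w (lastDescent w) (maxS w (lastDescent w))

/-- The defining relations of the nilCoxeter algebra of the hyperoctahedral group `W_n`. -/
inductive NCRel (n : ℕ) : FreeAlgebra ℤ (Fin n) → FreeAlgebra ℤ (Fin n) → Prop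
  | sq (i : Fin n) : NCRel n (FreeAlgebra.ι ℤ i * FreeAlgebra.ι ℤ i) 0
  | comm (i j : Fin n) (h : i.val + 2 ≤ j.val) :
      NCRel n (FreeAlgebra.ι ℤ i * FreeAlgebra.ι ℤ j) (FreeAlgebra.ι ℤ j * FreeAlgebra.ι ℤ i)
  | braid (i j : Fin n) (h1 : 1 ≤ i.val) (h2 : j.val = i.val + 1) :
      NCRel n (FreeAlgebra.ι ℤ i * FreeAlgebra.ι ℤ j * FreeAlgebra.ι ℤ i)
              (FreeAlgebra.ι ℤ j * FreeAlgebra.ι ℤ i * FreeAlgebra.ι ℤ j)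
  | bzero (i j : Fin n) (h0 : i.val = 0) (h1 : j.val = 1) :
      NCRel n (FreeAlgebra.ι ℤ i * FreeAlgebra.ι ℤ j * FreeAlgebra.ι ℤ i * FreeAlgebra.ι ℤ j)
              (FreeAlgebra.ι ℤ j * FreeAlgebra.ι ℤ i * FreeAlgebra.ι ℤ j * FreeAlgebra.ι ℤ i)

/-- The nilCoxeter algebra of `W_n`. -/
abbrev NC (n : ℕ) := RingQuot (NCRel n)

/-- The generator `u_i` of the nilCoxeter algebra (and `0` for `i ≥ n`). -/
def NCgen (n : ℕ) (i : ℕ) : NC n :=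
  if h : i < n then RingQuot.mkAlgHom ℤ (NCRel n) (FreeAlgebra.ι ℤ (⟨i, h⟩ : Fin n)) else 0

/-- The hyperoctahedral group `W_n` as a type. -/
abbrev WnSub (n : ℕ) := {f : Equiv.Perm ℤ // InWn n f}

/-- `l` is a reduced word for `f` (letters in `{0,...,n-1}`). -/
def ReducedWordN (n : ℕ) (f : Equiv.Perm ℤ) (l : List ℕ) : Prop :=
  (∀ a ∈ l, a < n) ∧ (l.map wS).prod = f ∧
    ∀ l' : List ℕ, (∀ a ∈ l', a < n) → (l'.map wS).prod = f → l.length ≤ l'.length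

/-- `C(a) = (1+a u_{n-1})⋯(1+a u_1)(1+2a u_0)(1+a u_1)⋯(1+a u_{n-1})` with scalar `a`. -/
def Celt (n : ℕ) (a : ℤ) : NC n :=
  (((List.range (n - 1)).map fun j => 1 + algebraMap ℤ (NC n) a * NCgen n (n - 1 - j)).prod) *
    (1 + algebraMap ℤ (NC n) (2 * a) * NCgen n 0) *
  (((List.range (n - 1)).map fun j => 1 + algebraMap ℤ (NC n) a * NCgen n (j + 1)).prod)

/-- `A_1(a) = (1+a u_{n-1})(1+a u_{n-2})⋯(1+a u_1)` with scalar `a`. -/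
def A1elt (n : ℕ) (a : ℤ) : NC n :=
  ((List.range (n - 1)).map fun j => 1 + algebraMap ℤ (NC n) a * NCgen n (n - 1 - j)).prod

/-- Polynomials in two central indeterminates `s`, `t` over the nilCoxeter algebra. -/
abbrev NCP (n : ℕ) := Polynomial (Polynomial (NC n))

/-- The generator `u_i` viewed in `NCP n`. -/
def NCPu (n : ℕ) (i : ℕ) : NCP n := Polynomial.C (Polynomial.C (NCgen n i))

/-- The indeterminate `t`. -/
def tvar (n : ℕ) : NCP n := Polynomial.X

/-- The indeterminate `s`. -/
def svar (n : ℕ) : NCP n := Polynomial.C Polynomial.X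

/-- `A_i(t) = (1 + t u_{n-1})(1 + t u_{n-2}) ⋯ (1 + t u_i)`. -/
def Aop (n i : ℕ) (t : NCP n) : NCP n :=
  ((List.range (n - i)).map fun j => 1 + t * NCPu n (n - 1 - j)).prod

/-!
For `i ≥ 1` only `u_1, u_2, …` occur in `A_i`, and they satisfy the nilCoxeter relations of type `A`.
Write `h_j(t) = 1 + t u_j`. For central `x, y` the nil and braid relations give
`h_a(x) h_{a+1}(y) h_a(y) = h_{a+1}(y) S_a(x, y)` with
`S_a(x, y) = 1 + (x + y) u_a + x y (u_a u_{a+1} - u_{a+1} u_a)` symmetric in `x, y`.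
As `h_a(x)` commutes with every `h_b(y)`, `b ≥ a + 2`, this gives
`A_a(x) A_a(y) = A_{a+1}(x) A_{a+1}(y) S_a(x, y)`, and induction on the number of factors concludes.
-/

section NilCoxeterTypeA

variable {R : Type*} [Ring R]

structure IsNilCoxeterTypeA (u : ℕ → R) : Prop where
  mul_self : ∀ j, u j * u j = 0
  commute : ∀ j k, j + 2 ≤ k → Commute (u j) (u k)
  braid : ∀ j, u j * u (j + 1) * u j = u (j + 1) * u j * u (j + 1)

theorem IsNilCoxeterTypeA.map {S F : Type*} [Ring S] [FunLike F R S] [RingHomClass F R S]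
    {u : ℕ → R} (hu : IsNilCoxeterTypeA u) (f : F) : IsNilCoxeterTypeA fun j => f (u j) where
  mul_self j := by rw [← map_mul, hu.mul_self, map_zero]
  commute j k hjk := (hu.commute j k hjk).map f
  braid j := by simp only [← map_mul, hu.braid]

def descProd (u : ℕ → R) (t : R) : ℕ → ℕ → R
  | _, 0 => 1
  | a, m + 1 => descProd u t (a + 1) m * (1 + t * u a)

def braidCorrection (u : ℕ → R) (x y : R) (a : ℕ) : R :=
  1 + (x + y) * u a + x * y * (u a * u (a + 1) - u (a + 1) * u a)

variable {u : ℕ → R} {x y : R}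

theorem braidCorrection_comm (hxy : Commute x y) (a : ℕ) :
    braidCorrection u x y a = braidCorrection u y x a := by
  rw [braidCorrection, braidCorrection, add_comm x, hxy.eq]

theorem mul_mul_eq_mul_braidCorrection (hu : IsNilCoxeterTypeA u)
    (hx : ∀ r, Commute x r) (hy : ∀ r, Commute y r) (a : ℕ) :
    (1 + x * u a) * ((1 + y * u (a + 1)) * (1 + y * u a))
      = (1 + y * u (a + 1)) * braidCorrection u x y a := by
  have xu : ∀ j r, u j * (x * r) = x * (u j * r) := fun j r => ((hx (u j)).left_comm r).symm
  have yu : ∀ j r, u j * (y * r) = y * (u j * r) := fun j r => ((hy (u j)).left_comm r).symm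
  have yx : ∀ r, y * (x * r) = x * (y * r) := fun r => ((hx y).left_comm r).symm
  have sq : ∀ j r, u j * (u j * r) = 0 := fun j r => by rw [← mul_assoc, hu.mul_self, zero_mul]
  have braid : u a * (u (a + 1) * u a) = u (a + 1) * (u a * u (a + 1)) := by
    rw [← mul_assoc, hu.braid, mul_assoc]
  simp only [braidCorrection, mul_add, add_mul, mul_sub, mul_one, one_mul, mul_assoc,
    xu, yu, yx, sq, hu.mul_self, braid, mul_zero, add_zero]
  abel

theorem descProd_eq_prod_range (u : ℕ → R) (t : R) (a m : ℕ) :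
    descProd u t a m = ((List.range m).map fun j => 1 + t * u (a + m - 1 - j)).prod := by
  induction m generalizing a with
  | zero => rfl
  | succ m ih =>
    rw [descProd, ih, List.range_succ, List.map_append, List.prod_append, List.map_singleton,
      List.prod_singleton, show a + (m + 1) - 1 - m = a by omega]
    refine congrArg (· * _) (congrArg List.prod (List.map_congr_left fun j _ => ?_))
    congr 3
    omega

theorem commute_descProd (hu : IsNilCoxeterTypeA u) (hx : ∀ r, Commute x r)
    (hy : ∀ r, Commute y r) {a b : ℕ} (hab : a + 2 ≤ b) (m : ℕ) :
    Commute (1 + x * u a) (descProd u y b m) := by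
  induction m generalizing b with
  | zero => exact Commute.one_right _
  | succ m ih =>
    refine (ih (by omega)).mul_right (Commute.one_right _ |>.add_right ?_)
    exact (hy _).symm.mul_right
      ((Commute.one_left _).add_left ((hx _).mul_left (hu.commute a b hab)))

theorem descProd_mul_descProd_succ_succ (hu : IsNilCoxeterTypeA u)
    (hx : ∀ r, Commute x r) (hy : ∀ r, Commute y r) (a m : ℕ) :
    descProd u x a (m + 2) * descProd u y a (m + 2)
      = descProd u x (a + 1) (m + 1) * descProd u y (a + 1) (m + 1) * braidCorrection u x y a := by
  simp only [descProd, mul_assoc]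
  rw [(commute_descProd hu hx hy le_rfl m).left_comm, mul_mul_eq_mul_braidCorrection hu hx hy]

theorem commute_descProd_descProd (hu : IsNilCoxeterTypeA u)
    (hx : ∀ r, Commute x r) (hy : ∀ r, Commute y r) (a m : ℕ) :
    Commute (descProd u x a m) (descProd u y a m) := by
  induction m using Nat.twoStepInduction generalizing a with
  | zero => exact Commute.one_left _
  | one =>
    simp only [descProd, one_mul]
    exact (Commute.one_left _).add_left <| (Commute.one_right _).add_right <|
      (hx _).mul_left ((hy _).symm.mul_right (Commute.refl _))
  | more m _ ih =>
    rw [Commute, SemiconjBy, descProd_mul_descProd_succ_succ hu hx hy,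
      descProd_mul_descProd_succ_succ hu hy hx, (ih (a + 1)).eq, braidCorrection_comm (hx y)]

end NilCoxeterTypeA

-- Instance search gives up on `Ring (NCP n)` at the default `maxSynthPendingDepth`.
instance (n : ℕ) : Ring (NCP n) := @Polynomial.ring (Polynomial (NC n)) Polynomial.ring

theorem NCgen_of_lt {n i : ℕ} (h : i < n) :
    NCgen n i = RingQuot.mkAlgHom ℤ (NCRel n) (FreeAlgebra.ι ℤ ⟨i, h⟩) :=
  dif_pos h

theorem NCgen_of_le {n i : ℕ} (h : n ≤ i) : NCgen n i = 0 :=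
  dif_neg (Nat.not_lt.mpr h)

theorem isNilCoxeterTypeA_NCgen_succ (n : ℕ) : IsNilCoxeterTypeA fun j => NCgen n (j + 1) where
  mul_self j := by
    rcases lt_or_ge (j + 1) n with h | h
    · rw [NCgen_of_lt h, ← map_mul, RingQuot.mkAlgHom_rel ℤ (NCRel.sq _), map_zero]
    · rw [NCgen_of_le h, mul_zero]
  commute j k hjk := by
    rcases lt_or_ge (k + 1) n with h | h
    · rw [NCgen_of_lt (by omega : j + 1 < n), NCgen_of_lt h, Commute, SemiconjBy, ← map_mul,
        ← map_mul, RingQuot.mkAlgHom_rel ℤ (NCRel.comm _ _ (by simpa))]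
    · rw [NCgen_of_le h]
      exact Commute.zero_right _
  braid j := by
    rcases lt_or_ge (j + 1 + 1) n with h | h
    · rw [NCgen_of_lt (by omega : j + 1 < n), NCgen_of_lt h]
      simp only [← map_mul]
      rw [RingQuot.mkAlgHom_rel ℤ (NCRel.braid _ _ (by simp) rfl)]
    · rw [NCgen_of_le h, mul_zero, zero_mul, mul_zero]

theorem commute_svar (n : ℕ) (p : NCP n) : Commute (svar n) p := by
  ext k : 1
  simp only [svar, Polynomial.coeff_C_mul, Polynomial.coeff_mul_C, (Polynomial.commute_X _).eq]

theorem commute_tvar (n : ℕ) (p : NCP n) : Commute (tvar n) p := Polynomial.commute_X p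

theorem Aop_eq_descProd (n i : ℕ) (hi : 1 ≤ i) (t : NCP n) :
    Aop n i t = descProd (fun j => NCPu n (j + 1)) t (i - 1) (n - i) := by
  rw [Aop, descProd_eq_prod_range]
  refine congrArg List.prod (List.map_congr_left fun j hj => ?_)
  rw [List.mem_range] at hj
  congr 3
  omega

theorem Aop_commute_general (n i : ℕ) (h1 : 1 ≤ i) :
    Aop n i (svar n) * Aop n i (tvar n) = Aop n i (tvar n) * Aop n i (svar n) := by
  rw [Aop_eq_descProd n i h1, Aop_eq_descProd n i h1]
  exact commute_descProd_descProd
    ((isNilCoxeterTypeA_NCgen_succ n).map (Polynomial.C.comp Polynomial.C)) (commute_svar n)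
    (commute_tvar n) _ _

theorem Aop_commute (n i : ℕ) (h1 : 1 ≤ i) (h2 : i ≤ n - 1) :
    Aop n i (svar n) * Aop n i (tvar n) = Aop n i (tvar n) * Aop n i (svar n) :=
  Aop_commute_general n i h1

end Giambelli
end
end

section
/- Every k-Grassmannian signed permutation w ∈ W_n admits a unique decomposition w = (u_k,...,u_1, -ζ_1,...,-ζ_r, v_{n-k-r},...,v_1) where u, ζ, v are strict partitions of lengths k, r, and n-k-r respectively. -/
/-!
The Coxeter length of a signed permutation is half an inversion count (`twiceLength`), and right
multiplication by `s_p` lowers that count exactly when `w` has a descent at `p`, with the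
convention `w_0 = 0`. Hence a `k`-Grassmannian `w` has no descent except at `k`: its entries
satisfy `0 < w_1 < ⋯ < w_k` and `w_{k+1} < ⋯ < w_n`, so the negative entries among the latter come
first. Reading off the three blocks gives `u`, `ζ` and `v`; they are unique because the
decomposition lists the values of `w`, and `r` is its number of negative entries after position `k`.
-/

open Equiv

attribute [local instance] Classical.propDecidable

noncomputable section

namespace Giambelli

/-- `u` is a strict partition of length exactly `k` (1-based entries, normalized
to vanish outside `{1,...,k}`). -/
def IsStrictPartFn (u : ℕ → ℕ) (k : ℕ) : Prop :=
  (∀ i j : ℕ, 1 ≤ i → i < j → j ≤ k → u j < u i) ∧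
  (∀ i : ℕ, 1 ≤ i → i ≤ k → 0 < u i) ∧
  (∀ i : ℕ, i = 0 ∨ k < i → u i = 0)

/-- `lam` is a partition (1-based parts, normalized by `lam 0 = 0`). -/
def IsPartFn (lam : ℕ → ℕ) : Prop :=
  (∀ i j : ℕ, 1 ≤ i → i ≤ j → lam j ≤ lam i) ∧ lam 0 = 0 ∧
    ∃ N : ℕ, ∀ i : ℕ, N ≤ i → lam i = 0

/-- `lam` is `k`-strict: all parts greater than `k` are distinct. -/
def IsKStrict (k : ℕ) (lam : ℕ → ℕ) : Prop :=
  ∀ i j : ℕ, 1 ≤ i → i < j → k < lam j → lam j < lam i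

/-- `w = (u_k,...,u_1, -ζ_1,...,-ζ_r, v_{n-k-r},...,v_1)` as an element of `W_n`. -/
def Decomp (n k r : ℕ) (w : Equiv.Perm ℤ) (u z v : ℕ → ℕ) : Prop :=
  k + r ≤ n ∧ IsStrictPartFn u k ∧ IsStrictPartFn z r ∧ IsStrictPartFn v (n - k - r) ∧
  (∀ i : ℕ, 1 ≤ i → i ≤ k → w (i : ℤ) = (u (k + 1 - i) : ℤ)) ∧
  (∀ i : ℕ, k < i → i ≤ k + r → w (i : ℤ) = -(z (i - k) : ℤ)) ∧
  (∀ i : ℕ, k + r < i → i ≤ n → w (i : ℤ) = (v (n + 1 - i) : ℤ))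

/-- The length of column `c` of the Young diagram of `lam` (1-based). -/
def colLen (lam : ℕ → ℕ) (c : ℕ) : ℕ := Set.ncard {i : ℕ | 1 ≤ i ∧ c ≤ lam i}

/-- `lam` is the `k`-strict partition associated to the decomposition data `(u, ζ)`:
its first `k` column lengths are `μ_i = u_i + i - k - 1 + #{j | ζ_j > u_i}`, and its
part in columns `k+1` and higher is given by `ζ`. -/
def ShapeOfDecomp (k r : ℕ) (u z lam : ℕ → ℕ) : Prop :=
  (∀ i : ℕ, 1 ≤ i → i ≤ k →
    (colLen lam i : ℤ) = (u i : ℤ) + (i : ℤ) - (k : ℤ) - 1 +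
      (Set.ncard {j : ℕ | 1 ≤ j ∧ j ≤ r ∧ u i < z j} : ℤ)) ∧
  (∀ i : ℕ, 1 ≤ i → lam i - k = z i)

/-- The `k`-Grassmannian element `w` has shape the `k`-strict partition `lam`. -/
def HasShape (k : ℕ) (w : Equiv.Perm ℤ) (lam : ℕ → ℕ) : Prop :=
  IsPartFn lam ∧ IsKStrict k lam ∧
  ∃ (n r : ℕ) (u z v : ℕ → ℕ), InWn n w ∧ Decomp n k r w u z v ∧ ShapeOfDecomp k r u z lam

open scoped Finset

namespace IsOddPerm

variable {f g : Perm ℤ}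

lemma map_zero (hf : IsOddPerm f) : f 0 = 0 := by
  have h := hf 0
  rw [neg_zero] at h
  omega

lemma apply_ne_zero (hf : IsOddPerm f) {x : ℤ} (hx : x ≠ 0) : f x ≠ 0 :=
  fun h => hx (f.injective (h.trans hf.map_zero.symm))

lemma mul (hf : IsOddPerm f) (hg : IsOddPerm g) : IsOddPerm (f * g) := fun x => by
  simp only [Perm.mul_apply, hg x, hf (g x)]

end IsOddPerm

lemma isOddPerm_one : IsOddPerm 1 := fun _ => rfl

namespace InWn

variable {n : ℕ} {f g : Perm ℤ}

lemma abs_apply_le (h : InWn n f) {x : ℤ} (hx : |x| ≤ n) : |f x| ≤ n := by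
  by_contra hc
  have hfix : f x = x := f.injective (h.2 _ (not_le.mp hc))
  rw [hfix] at hc
  exact hc hx

lemma apply_natCast_le (h : InWn n f) {i : ℕ} (hi : n ≤ i) : f i ≤ i := by
  rcases hi.lt_or_eq with hi | rfl
  · exact (h.2 i (by rw [Nat.abs_cast]; exact_mod_cast hi)).le
  · exact (abs_le.mp (h.abs_apply_le (by rw [Nat.abs_cast]))).2

lemma mul (hf : InWn n f) (hg : InWn n g) : InWn n (f * g) :=
  ⟨hf.1.mul hg.1, fun x hx => by simp only [Perm.mul_apply, hg.2 x hx, hf.2 x hx]⟩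

end InWn

lemma wS_zero : wS 0 = swap 1 (-1) := if_pos rfl

lemma wS_of_ne_zero {p : ℕ} (hp : p ≠ 0) :
    wS p = swap (p : ℤ) ((p : ℤ) + 1) * swap (-(p : ℤ)) (-((p : ℤ) + 1)) := if_neg hp

lemma wS_mul_self (p : ℕ) : wS p * wS p = 1 := by
  ext x
  rcases eq_or_ne p 0 with rfl | hp
  · simp only [wS_zero, swap_mul_self, Perm.one_apply]
  · simp only [wS_of_ne_zero hp, Perm.mul_apply, swap_apply_def, Perm.one_apply]
    split_ifs <;> omega

lemma inWn_wS (p : ℕ) : InWn (p + 1) (wS p) := by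
  constructor
  · intro x
    rcases eq_or_ne p 0 with rfl | hp
    · simp only [wS_zero, swap_apply_def]
      split_ifs <;> omega
    · simp only [wS_of_ne_zero hp, Perm.mul_apply, swap_apply_def]
      split_ifs <;> omega
  · intro x hx
    rw [lt_abs] at hx
    push_cast at hx
    rcases eq_or_ne p 0 with rfl | hp
    · simp only [wS_zero, swap_apply_def]
      split_ifs <;> omega
    · simp only [wS_of_ne_zero hp, Perm.mul_apply, swap_apply_def]
      split_ifs <;> omega

lemma InWn.mul_wS {n p : ℕ} {f : Perm ℤ} (h : InWn n f) (hp : p < n) : InWn n (f * wS p) :=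
  h.mul ⟨(inWn_wS p).1, fun x hx => (inWn_wS p).2 x (lt_of_le_of_lt (by exact_mod_cast hp) hx)⟩

section Descent

variable {f : Perm ℤ}

lemma descent_iff (hf : IsOddPerm f) {p : ℕ} : Descent f p ↔ f ((p : ℤ) + 1) < f p := by
  rcases eq_or_ne p 0 with rfl | hp
  · simp [Descent, hf.map_zero]
  · simp [Descent, hp]

lemma lt_apply_succ_of_not_descent (hf : IsOddPerm f) {p : ℕ} (h : ¬ Descent f p) :
    f p < f ((p : ℤ) + 1) := by
  rw [descent_iff hf, not_lt] at h
  exact h.lt_of_ne (f.injective.ne (by omega))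

lemma apply_lt_apply_of_forall_not_descent (hf : IsOddPerm f) {i j : ℕ} (hij : i < j)
    (h : ∀ t : ℕ, i ≤ t → t < j → ¬ Descent f t) : f i < f j := by
  induction j, hij using Nat.le_induction with
  | base => exact_mod_cast lt_apply_succ_of_not_descent hf (h i le_rfl (Nat.lt_succ_self i))
  | succ j hij ih =>
    have hj := lt_apply_succ_of_not_descent hf (h j (by omega) (Nat.lt_succ_self j))
    push_cast
    exact (ih fun t h1 h2 => h t h1 (by omega)).trans hj

lemma InWn.lt_of_descent {n p : ℕ} (h : InWn n f) (hd : Descent f p) : p < n := by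
  rw [descent_iff h.1] at hd
  by_contra hpn
  have hfix : f ((p : ℤ) + 1) = (p : ℤ) + 1 :=
    h.2 _ (by rw [abs_of_nonneg (by positivity)]; omega)
  have := h.apply_natCast_le (not_lt.mp hpn)
  omega

lemma InWn.eq_one_of_forall_not_descent {n : ℕ} (h : InWn n f) (hd : ∀ p, ¬ Descent f p) :
    f = 1 := by
  have hmono : ∀ i j : ℕ, i < j → f i < f j := fun i j hij =>
    apply_lt_apply_of_forall_not_descent h.1 hij fun t _ _ => hd t
  -- a strictly increasing integer sequence with `f 0 = 0` and `f n ≤ n` is the identity on `[0, n]`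
  have hge : ∀ i : ℕ, (i : ℤ) ≤ f i := by
    intro i
    induction i with
    | zero => simp [h.1.map_zero]
    | succ i ih => have := hmono i (i + 1) (Nat.lt_succ_self i); push_cast at this ⊢; omega
  have hle : ∀ i : ℕ, i ≤ n → f i ≤ i := by
    intro i hi
    induction hi using Nat.decreasingInduction with
    | self => exact h.apply_natCast_le le_rfl
    | of_succ j hj ih => have := hmono j (j + 1) (Nat.lt_succ_self j); push_cast at this ih; omega
  have hfix : ∀ i : ℕ, f i = i := fun i => (le_or_gt i n).elim
    (fun hi => le_antisymm (hle i hi) (hge i)) (fun hi => h.2 _ (by simpa using hi))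
  ext x
  obtain ⟨i, rfl | rfl⟩ := Int.eq_nat_or_neg x
  · exact hfix i
  · rw [h.1, hfix]
    rfl

end Descent

def inversions (s : Finset ℤ) (f : Perm ℤ) : Finset (ℤ × ℤ) :=
  (s ×ˢ s).filter fun q => q.1 < q.2 ∧ f q.2 < f q.1

lemma mem_inversions {s : Finset ℤ} {f : Perm ℤ} {q : ℤ × ℤ} :
    q ∈ inversions s f ↔ q.1 ∈ s ∧ q.2 ∈ s ∧ q.1 < q.2 ∧ f q.2 < f q.1 := by
  simp [inversions, and_assoc]

/-- Apart from `(a, b)`, the inversions of `f * swap a b` and of `f` correspond under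
`(x, y) ↦ (swap a b x, swap a b y)`, because `swap a b` preserves the order of `s` off `{a, b}`. -/
lemma card_inversions_mul_swap {s : Finset ℤ} {a b : ℤ} (ha : a ∈ s) (hb : b ∈ s) (hab : a < b)
    (hadj : ∀ c ∈ s, a < c → b ≤ c) (f : Perm ℤ) :
    #(inversions s (f * swap a b)) + (if f b < f a then 1 else 0) =
      #(inversions s f) + (if f a < f b then 1 else 0) := by
  have hadj' : ∀ c ∈ s, c < b → c ≤ a := fun c hc hcb => not_lt.mp fun h => (hadj c hc h).not_gt hcb
  have hmaps : ∀ {c}, c ∈ s → swap a b c ∈ s := fun hc => by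
    rw [swap_apply_def]; split_ifs <;> assumption
  have herase : (inversions s (f * swap a b)).erase (a, b) =
      ((inversions s f).erase (a, b)).map ((swap a b).prodCongr (swap a b)).toEmbedding := by
    ext ⟨x, y⟩
    simp only [Finset.mem_erase, Finset.mem_map_equiv, mem_inversions, Perm.mul_apply,
      Equiv.prodCongr_symm, symm_swap, Equiv.prodCongr_apply, Prod.map, ne_eq, Prod.mk.injEq]
    have := hadj x; have := hadj y; have := hadj' x; have := hadj' y
    constructor
    · rintro ⟨hne, hx, hy, hxy, hf⟩
      refine ⟨?_, hmaps hx, hmaps hy, ?_, hf⟩ <;> simp only [swap_apply_def] <;> split_ifs <;> grind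
    · rintro ⟨hne, hx, hy, hxy, hf⟩
      have hx' : x ∈ s := by simpa using hmaps hx
      have hy' : y ∈ s := by simpa using hmaps hy
      refine ⟨?_, hx', hy', ?_, hf⟩ <;> simp only [swap_apply_def] at hne hxy <;>
        split_ifs at hne hxy <;> grind
  have hmem_mul : (a, b) ∈ inversions s (f * swap a b) ↔ f a < f b := by
    simp [mem_inversions, ha, hb, hab]
  have hmem : (a, b) ∈ inversions s f ↔ f b < f a := by
    simp [mem_inversions, ha, hb, hab]
  have hcard := congrArg Finset.card herase
  rw [Finset.card_map] at hcard
  rcases lt_or_gt_of_ne (f.injective.ne hab.ne : f a ≠ f b) with hlt | hlt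
  · rw [if_neg hlt.not_gt, if_pos hlt, ← Finset.card_erase_add_one (hmem_mul.mpr hlt), hcard,
      Finset.erase_eq_of_notMem (mt hmem.mp hlt.not_gt)]
  · rw [if_pos hlt, if_neg hlt.not_gt, ← Finset.card_erase_add_one (hmem.mpr hlt), ← hcard,
      Finset.erase_eq_of_notMem (mt hmem_mul.mp hlt.not_gt)]

def signedWindow (B : ℕ) : Finset ℤ := (Finset.Icc (-(B : ℤ)) B).erase 0

def negatives (B : ℕ) (f : Perm ℤ) : Finset ℤ := (Finset.Icc 1 (B : ℤ)).filter (f · < 0)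

/-- Each type B inversion of `f` occurs twice among the inversions of `f` on `±[1, B]`, except the
sign changes `f i < 0`, which occur once, as `(-i, i)`; counting those once more gives `2 ℓ(f)`
(`InWn.two_mul_len_eq`). -/
def twiceLength (B : ℕ) (f : Perm ℤ) : ℕ := #(inversions (signedWindow B) f) + #(negatives B f)

lemma mem_signedWindow {B : ℕ} {x : ℤ} : x ∈ signedWindow B ↔ x ≠ 0 ∧ -(B : ℤ) ≤ x ∧ x ≤ B := by
  simp [signedWindow]

lemma mem_negatives {B : ℕ} {f : Perm ℤ} {x : ℤ} :
    x ∈ negatives B f ↔ x ∈ Finset.Icc 1 (B : ℤ) ∧ f x < 0 :=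
  Finset.mem_filter

lemma card_negatives_mul_swap {B : ℕ} {a b : ℤ} (ha : a ∈ Finset.Icc 1 (B : ℤ))
    (hb : b ∈ Finset.Icc 1 (B : ℤ)) (f : Perm ℤ) :
    #(negatives B (f * swap a b)) = #(negatives B f) := by
  refine Finset.card_nbij' (swap a b) (swap a b) ?_ ?_ (fun _ _ => swap_apply_self ..)
    (fun _ _ => swap_apply_self ..)
  all_goals
    intro x hx
    simp only [Finset.mem_coe, mem_negatives, Perm.mul_apply, swap_apply_self] at hx ⊢
    refine ⟨?_, hx.2⟩
    rw [swap_apply_def]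
    split_ifs <;> first | assumption | exact hx.1

lemma negatives_mul_swap_of_neg {B : ℕ} {a b : ℤ} (ha : a < 0) (hb : b < 0) (f : Perm ℤ) :
    negatives B (f * swap a b) = negatives B f := by
  refine Finset.filter_congr fun x hx => ?_
  rw [Finset.mem_Icc] at hx
  rw [Perm.mul_apply, swap_apply_of_ne_of_ne (by omega) (by omega)]

lemma card_negatives_mul_wS_zero {B : ℕ} {f : Perm ℤ} (hf : IsOddPerm f) (hB : 0 < B) :
    #(negatives B (f * wS 0)) + (if f 1 < 0 then 1 else 0) =
      #(negatives B f) + (if 0 < f 1 then 1 else 0) := by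
  have h1 : (1 : ℤ) ∈ Finset.Icc 1 (B : ℤ) := by simp; omega
  simp only [negatives, Finset.card_filter, ← Finset.add_sum_erase _ _ h1, wS_zero,
    Perm.mul_apply, swap_apply_left, hf 1, Left.neg_neg_iff]
  rw [Finset.sum_congr rfl fun x hx => by
    rw [swap_apply_of_ne_of_ne (Finset.ne_of_mem_erase hx) (by simp at hx; omega)]]
  omega

lemma twiceLength_mul_wS_zero {B : ℕ} {f : Perm ℤ} (hf : IsOddPerm f) (hB : 0 < B) :
    twiceLength B (f * wS 0) + (if f 1 < 0 then 2 else 0) =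
      twiceLength B f + (if f 1 < 0 then 0 else 2) := by
  -- `s_0` exchanges the positions `-1` and `1`, which are adjacent in the signed window
  have hinv := card_inversions_mul_swap (s := signedWindow B) (a := -1) (b := 1)
    (mem_signedWindow.mpr ⟨by norm_num, by omega, by omega⟩)
    (mem_signedWindow.mpr ⟨by norm_num, by omega, by omega⟩) (by norm_num)
    (fun c hc h => by rw [mem_signedWindow] at hc; omega) f
  have hneg := card_negatives_mul_wS_zero hf hB
  rw [wS_zero, swap_comm] at hneg ⊢
  simp only [hf 1, neg_lt_self_iff] at hinv
  have : f 1 ≠ 0 := hf.apply_ne_zero one_ne_zero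
  unfold twiceLength
  split_ifs at hinv hneg ⊢ <;> omega

lemma twiceLength_mul_wS_of_ne_zero {B p : ℕ} {f : Perm ℤ} (hf : IsOddPerm f) (hp0 : p ≠ 0)
    (hp : p < B) :
    twiceLength B (f * wS p) + (if f (p + 1) < f p then 2 else 0) =
      twiceLength B f + (if f (p + 1) < f p then 0 else 2) := by
  have hp1 : (1 : ℤ) ≤ p := by exact_mod_cast Nat.one_le_iff_ne_zero.mpr hp0
  have hpB : (p : ℤ) + 1 ≤ B := by exact_mod_cast hp
  have hmem : ∀ x : ℤ, x ≠ 0 → -(B : ℤ) ≤ x → x ≤ B → x ∈ signedWindow B :=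
    fun x h1 h2 h3 => mem_signedWindow.mpr ⟨h1, h2, h3⟩
  -- `s_p` exchanges the adjacent positions `p, p + 1`, and symmetrically `-(p + 1), -p`
  have hinv₁ := card_inversions_mul_swap (hmem p (by omega) (by omega) (by omega))
    (hmem (p + 1) (by omega) (by omega) hpB) (lt_add_one _) (fun c _ h => h) f
  have hinv₂ := card_inversions_mul_swap (hmem (-(p + 1)) (by omega) (by omega) (by omega))
    (hmem (-p) (by omega) (by omega) (by omega)) (by omega) (fun c _ h => by omega)
    (f * swap (p : ℤ) (p + 1))
  have hg₁ : (f * swap (p : ℤ) (p + 1)) (-p) = -f p := by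
    rw [Perm.mul_apply, swap_apply_of_ne_of_ne (by omega) (by omega), hf]
  have hg₂ : (f * swap (p : ℤ) (p + 1)) (-(p + 1)) = -f (p + 1) := by
    rw [Perm.mul_apply, swap_apply_of_ne_of_ne (by omega) (by omega), hf]
  simp only [hg₁, hg₂, neg_lt_neg_iff] at hinv₂
  have hneg : #(negatives B (f * wS p)) = #(negatives B f) := by
    rw [wS_of_ne_zero hp0, ← mul_assoc, swap_comm (-(p : ℤ)),
      negatives_mul_swap_of_neg (by omega) (by omega)]
    exact card_negatives_mul_swap (by simp; omega) (by simp; omega) f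
  rw [wS_of_ne_zero hp0, ← mul_assoc, swap_comm (-(p : ℤ))] at hneg ⊢
  have : f p ≠ f (p + 1) := f.injective.ne (by omega)
  unfold twiceLength
  split_ifs at hinv₁ hinv₂ ⊢ <;> omega

lemma twiceLength_mul_wS {B p : ℕ} {f : Perm ℤ} (hf : IsOddPerm f) (hp : p < B) :
    twiceLength B (f * wS p) + (if Descent f p then 2 else 0) =
      twiceLength B f + (if Descent f p then 0 else 2) := by
  rw [descent_iff hf]
  rcases eq_or_ne p 0 with rfl | hp0
  · have h := twiceLength_mul_wS_zero hf hp
    rw [Nat.cast_zero, zero_add, hf.map_zero]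
    split_ifs at h ⊢ <;> omega
  · have h := twiceLength_mul_wS_of_ne_zero hf hp0 hp
    split_ifs at h ⊢ <;> omega

lemma twiceLength_one (B : ℕ) : twiceLength B 1 = 0 := by
  simp only [twiceLength, Nat.add_eq_zero_iff, Finset.card_eq_zero,
    Finset.eq_empty_iff_forall_notMem, mem_inversions, mem_negatives, Perm.one_apply,
    Finset.mem_Icc]
  exact ⟨fun q hq => by omega, fun x hx => by omega⟩

lemma InWn.abs_le_of_apply_lt {n : ℕ} {f : Perm ℤ} (h : InWn n f) {x y : ℤ} (hxy : x < y)
    (hf : f y < f x) : |x| ≤ n ∧ |y| ≤ n := by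
  have hz : ∀ z : ℤ, (|z| ≤ n ∧ |f z| ≤ n) ∨ (n < |z| ∧ f z = z) := fun z =>
    (le_or_gt |z| n).imp (fun hz => ⟨hz, h.abs_apply_le hz⟩) fun hz => ⟨hz, h.2 z hz⟩
  rcases hz x with ⟨hx₁, hx₂⟩ | ⟨hx₁, hx₂⟩ <;> rcases hz y with ⟨hy₁, hy₂⟩ | ⟨hy₁, hy₂⟩ <;>
    simp only [abs_le, lt_abs] at hx₁ hx₂ hy₁ hy₂ ⊢ <;> omega

lemma InWn.twiceLength_eq {n B : ℕ} {f : Perm ℤ} (h : InWn n f) (hB : n ≤ B) :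
    twiceLength B f = twiceLength n f := by
  have hB' : (n : ℤ) ≤ B := by exact_mod_cast hB
  have hinv : inversions (signedWindow B) f = inversions (signedWindow n) f := by
    ext ⟨x, y⟩
    simp only [mem_inversions, mem_signedWindow]
    constructor
    · rintro ⟨hx, hy, hxy, hf⟩
      have := h.abs_le_of_apply_lt hxy hf
      simp only [abs_le] at this
      exact ⟨⟨hx.1, by omega, by omega⟩, ⟨hy.1, by omega, by omega⟩, hxy, hf⟩
    · rintro ⟨hx, hy, hxy, hf⟩
      exact ⟨⟨hx.1, by omega, by omega⟩, ⟨hy.1, by omega, by omega⟩, hxy, hf⟩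
  have hneg : negatives B f = negatives n f := by
    ext x
    simp only [mem_negatives, Finset.mem_Icc]
    refine ⟨fun ⟨⟨hx₁, hx₂⟩, hf⟩ => ⟨⟨hx₁, ?_⟩, hf⟩, fun ⟨⟨hx₁, hx₂⟩, hf⟩ => ⟨⟨hx₁, by omega⟩, hf⟩⟩
    by_contra hxn
    have := h.2 x (by rw [abs_of_pos (by omega)]; omega)
    omega
  rw [twiceLength, twiceLength, hinv, hneg]

lemma isOddPerm_prod_wS (l : List ℕ) : IsOddPerm (l.map wS).prod :=
  List.prod_induction _ (fun _ _ => IsOddPerm.mul) isOddPerm_one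
    (by simpa using fun p _ => (inWn_wS p).1)

lemma twiceLength_prod_wS_le {B : ℕ} (l : List ℕ) (hl : ∀ p ∈ l, p < B) :
    twiceLength B (l.map wS).prod ≤ 2 * l.length := by
  induction l using List.reverseRecOn with
  | nil => simp [twiceLength_one]
  | append_singleton l p ih =>
    have h := twiceLength_mul_wS (isOddPerm_prod_wS l) (hl p (by simp))
    have := ih fun q hq => hl q (by simp [hq])
    simp only [List.map_append, List.map_singleton, List.prod_append, List.prod_singleton,
      List.length_append, List.length_singleton]
    split_ifs at h <;> omega

lemma InWn.exists_word {n : ℕ} {f : Perm ℤ} (h : InWn n f) :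
    ∃ l : List ℕ, (l.map wS).prod = f ∧ 2 * l.length = twiceLength n f := by
  induction hN : twiceLength n f using Nat.strong_induction_on generalizing f with
  | _ N ih =>
  by_cases hf1 : f = 1
  · subst hf1
    exact ⟨[], rfl, by simp [← hN, twiceLength_one]⟩
  obtain ⟨p, hp⟩ : ∃ p, Descent f p := by
    by_contra hd
    exact hf1 (h.eq_one_of_forall_not_descent (not_exists.mp hd))
  have hpn := h.lt_of_descent hp
  have hstep := twiceLength_mul_wS h.1 hpn
  rw [if_pos hp, if_pos hp] at hstep
  obtain ⟨l, hl, hlen⟩ := ih _ (by omega) (h.mul_wS hpn) rfl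
  refine ⟨l ++ [p], ?_, ?_⟩
  · simp [hl, mul_assoc, wS_mul_self]
  · simp only [List.length_append, List.length_singleton]
    omega

lemma InWn.two_mul_len_eq {n : ℕ} {f : Perm ℤ} (h : InWn n f) : 2 * len f = twiceLength n f := by
  obtain ⟨l, hl, hlen⟩ := h.exists_word
  obtain ⟨l₀, hl₀, hprod⟩ : len f ∈ {m | ∃ l : List ℕ, l.length = m ∧ (l.map wS).prod = f} :=
    Nat.sInf_mem ⟨_, l, rfl, hl⟩
  have hle : len f ≤ l.length := Nat.sInf_le ⟨l, rfl, hl⟩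
  -- a shortest word may use letters beyond `n`, so compare in a window containing all of them
  have hge := twiceLength_prod_wS_le (B := n + l₀.sum + 1) l₀
    fun p hp => by have := List.le_sum_of_mem hp; omega
  rw [hprod, h.twiceLength_eq (by omega), hl₀] at hge
  omega

lemma InWn.not_descent_of_kGrass {n k p : ℕ} {w : Perm ℤ} (hw : InWn n w) (hg : kGrass k w)
    (hp : p ≠ k) : ¬ Descent w p := by
  intro hd
  have hpn := hw.lt_of_descent hd
  have hstep := twiceLength_mul_wS hw.1 hpn
  rw [if_pos hd, if_pos hd] at hstep
  have := hg p hp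
  have := hw.two_mul_len_eq
  have := (hw.mul_wS hpn).two_mul_len_eq
  omega

def toPartFn (m : ℕ) (g : ℕ → ℤ) : ℕ → ℕ := fun i => if 1 ≤ i ∧ i ≤ m then (g i).toNat else 0

lemma toPartFn_apply {m i : ℕ} {g : ℕ → ℤ} (hi₁ : 1 ≤ i) (hi : i ≤ m) (hg : 0 ≤ g i) :
    (toPartFn m g i : ℤ) = g i := by
  rw [toPartFn, if_pos ⟨hi₁, hi⟩, Int.toNat_of_nonneg hg]

lemma isStrictPartFn_toPartFn {m : ℕ} {g : ℕ → ℤ} (hpos : ∀ i, 1 ≤ i → i ≤ m → 0 < g i)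
    (hanti : ∀ i j, 1 ≤ i → i < j → j ≤ m → g j < g i) : IsStrictPartFn (toPartFn m g) m := by
  refine ⟨fun i j hi hij hj => ?_, fun i hi₁ hi => ?_, fun i hi => if_neg (by omega)⟩
  · have := hanti i j hi hij hj
    have := toPartFn_apply (m := m) hi (by omega) (hpos i hi (by omega)).le
    have := toPartFn_apply (m := m) (by omega) hj (hpos j (by omega) hj).le
    omega
  · have := toPartFn_apply hi₁ hi (hpos i hi₁ hi).le
    have := hpos i hi₁ hi
    omega

lemma IsStrictPartFn.ext {m : ℕ} {u u' : ℕ → ℕ} (hu : IsStrictPartFn u m)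
    (hu' : IsStrictPartFn u' m) (h : ∀ i, 1 ≤ i → i ≤ m → u i = u' i) : u = u' := by
  funext i
  by_cases hi : 1 ≤ i ∧ i ≤ m
  · exact h i hi.1 hi.2
  · rw [hu.2.2 i (by omega), hu'.2.2 i (by omega)]

lemma StrictMonoOn.exists_neg_iff_le {k n : ℕ} {g : ℕ → ℤ} (hg : StrictMonoOn g (Set.Ioc k n))
    (hkn : k ≤ n) :
    ∃ r, k + r ≤ n ∧ ∀ i, k < i → i ≤ n → (g i < 0 ↔ i ≤ k + r) := by
  set r := Nat.findGreatest (fun r => g (k + r) < 0) (n - k) with hr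
  refine ⟨r, by have := Nat.findGreatest_le (P := fun r => g (k + r) < 0) (n - k); omega,
    fun i hki hin => ⟨fun hi => ?_, fun hi => ?_⟩⟩
  · have := Nat.le_findGreatest (P := fun r => g (k + r) < 0) (n := n - k) (m := i - k) (by omega)
      (by rwa [Nat.add_sub_cancel' hki.le])
    omega
  · have hr0 : g (k + r) < 0 := Nat.findGreatest_of_ne_zero hr.symm (by omega)
    have hrn := Nat.findGreatest_le (P := fun r => g (k + r) < 0) (n - k)
    exact lt_of_le_of_lt (hg.monotoneOn ⟨hki, hin⟩ ⟨by omega, by omega⟩ hi) hr0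

lemma exists_decomp_of_not_descent {n k : ℕ} (hk : k ≤ n) {w : Perm ℤ} (hw : IsOddPerm w)
    (hd : ∀ p, p ≠ k → ¬ Descent w p) : ∃ r u z v, Decomp n k r w u z v := by
  have hmono : ∀ i j : ℕ, i < j → j ≤ k ∨ k < i → w i < w j := fun i j hij hijk =>
    apply_lt_apply_of_forall_not_descent hw hij fun t hit htj => hd t (by omega)
  have hne : ∀ i : ℕ, 1 ≤ i → w i ≠ 0 := fun i hi => hw.apply_ne_zero (by omega)
  obtain ⟨r, hrn, hneg⟩ := StrictMonoOn.exists_neg_iff_le (g := fun i => w i)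
    (fun i hi j _ hij => hmono i j hij (Or.inr hi.1)) hk
  have hpos : ∀ i : ℕ, 1 ≤ i → i ≤ k → 0 < w i := fun i hi₁ hi => by
    simpa [hw.map_zero] using hmono 0 i (by omega) (Or.inl hi)
  have hvpos : ∀ i : ℕ, k + r < i → i ≤ n → 0 < w i := fun i hi hin => by
    have := hne i (by omega)
    have := (hneg i (by omega) hin).not.mpr (by omega)
    omega
  refine ⟨r, toPartFn k (fun i => w (k + 1 - i : ℕ)), toPartFn r (fun i => -w (k + i : ℕ)),
    toPartFn (n - k - r) (fun i => w (n + 1 - i : ℕ)), ?_, ?_, ?_, ?_, ?_, ?_, ?_⟩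
  · omega
  · exact isStrictPartFn_toPartFn (fun i _ _ => hpos _ (by omega) (by omega))
      fun i j _ _ _ => hmono _ _ (by omega) (Or.inl (by omega))
  · refine isStrictPartFn_toPartFn (fun i _ _ => neg_pos.mpr ((hneg _ (by omega) ?_).mpr ?_))
      fun i j _ _ _ => neg_lt_neg (hmono _ _ (by omega) (Or.inr (by omega))) <;> omega
  · exact isStrictPartFn_toPartFn (fun i _ _ => hvpos _ (by omega) (by omega))
      fun i j _ _ _ => hmono _ _ (by omega) (Or.inr (by omega))
  · intro i hi₁ hi
    rw [toPartFn_apply (by omega) (by omega) (hpos _ (by omega) (by omega)).le,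
      Nat.sub_sub_self (by omega)]
  · intro i hi₁ hi
    have hidx : k + (i - k) = i := by omega
    have := (hneg i hi₁ (by omega)).mpr hi
    rw [toPartFn_apply (by omega) (by omega) (by simp only [hidx]; omega), hidx, neg_neg]
  · intro i hi₁ hi
    rw [toPartFn_apply (by omega) (by omega) (hvpos _ (by omega) (by omega)).le,
      Nat.sub_sub_self (by omega)]

namespace Decomp

variable {n k r r' : ℕ} {w : Perm ℤ} {u z v u' z' v' : ℕ → ℕ}

lemma r_le (h : Decomp n k r w u z v) (h' : Decomp n k r' w u' z' v') : r ≤ r' := by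
  by_contra hlt
  obtain ⟨_, _, hz, _, _, hwz, _⟩ := h
  obtain ⟨_, _, _, _, _, _, hwv'⟩ := h'
  have := hz.2.1 (k + r' + 1 - k) (by omega) (by omega)
  have := hwz (k + r' + 1) (by omega) (by omega)
  have := hwv' (k + r' + 1) (by omega) (by omega)
  omega

lemma unique (h : Decomp n k r w u z v) (h' : Decomp n k r' w u' z' v') :
    u = u' ∧ z = z' ∧ v = v' ∧ r = r' := by
  obtain rfl := (h.r_le h').antisymm (h'.r_le h)
  obtain ⟨_, hu, hz, hv, hwu, hwz, hwv⟩ := h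
  obtain ⟨_, hu', hz', hv', hwu', hwz', hwv'⟩ := h'
  refine ⟨hu.ext hu' fun i _ _ => ?_, hz.ext hz' fun i _ _ => ?_, hv.ext hv' fun i _ _ => ?_, rfl⟩
  · have := hwu (k + 1 - i) (by omega) (by omega)
    have := hwu' (k + 1 - i) (by omega) (by omega)
    rw [Nat.sub_sub_self (by omega)] at *
    omega
  · have := hwz (k + i) (by omega) (by omega)
    have := hwz' (k + i) (by omega) (by omega)
    rw [Nat.add_sub_cancel_left] at *
    omega
  · have := hwv (n + 1 - i) (by omega) (by omega)
    have := hwv' (n + 1 - i) (by omega) (by omega)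
    rw [Nat.sub_sub_self (by omega)] at *
    omega

end Decomp

theorem grassmannian_unique_decomposition (n k : ℕ) (hk : k ≤ n)
    (w : Equiv.Perm ℤ) (hw : InWn n w) (hg : kGrass k w) :
    ∃! t : (ℕ → ℕ) × (ℕ → ℕ) × (ℕ → ℕ) × ℕ,
      Decomp n k t.2.2.2 w t.1 t.2.1 t.2.2.1 := by
  obtain ⟨r, u, z, v, h⟩ :=
    exists_decomp_of_not_descent hk hw.1 fun p hp => hw.not_descent_of_kGrass hg hp
  refine ⟨(u, z, v, r), h, fun ⟨u', z', v', r'⟩ h' => ?_⟩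
  obtain ⟨rfl, rfl, rfl, rfl⟩ := h'.unique h
  rfl

end Giambelli
end
end

section
/- In the nilCoxeter algebra of the type D Weyl group W̃_n, the elements D(t) = (1 + t u_{n-1})···(1 + t u_2)(1 + t u_1)(1 + t u_0)(1 + t u_2)···(1 + t u_{n-1}) satisfy D(s) D(t) = D(t) D(s) for commuting indeterminates s, t. -/
attribute [local instance] Classical.propDecidable

noncomputable section

namespace Giambelli

/-- The defining relations of the nilCoxeter algebra of the type D Weyl group `W̃_n`. -/
inductive NCDRel (n : ℕ) : FreeAlgebra ℤ (Fin n) → FreeAlgebra ℤ (Fin n) → Prop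
  | sq (i : Fin n) : NCDRel n (FreeAlgebra.ι ℤ i * FreeAlgebra.ι ℤ i) 0
  | comm01 (i j : Fin n) (h0 : i.val = 0) (h1 : j.val = 1) :
      NCDRel n (FreeAlgebra.ι ℤ i * FreeAlgebra.ι ℤ j) (FreeAlgebra.ι ℤ j * FreeAlgebra.ι ℤ i)
  | d02 (i j : Fin n) (h0 : i.val = 0) (h2 : j.val = 2) :
      NCDRel n (FreeAlgebra.ι ℤ i * FreeAlgebra.ι ℤ j * FreeAlgebra.ι ℤ i)
               (FreeAlgebra.ι ℤ j * FreeAlgebra.ι ℤ i * FreeAlgebra.ι ℤ j)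
  | braid (i j : Fin n) (h1 : 1 ≤ i.val) (h2 : j.val = i.val + 1) :
      NCDRel n (FreeAlgebra.ι ℤ i * FreeAlgebra.ι ℤ j * FreeAlgebra.ι ℤ i)
               (FreeAlgebra.ι ℤ j * FreeAlgebra.ι ℤ i * FreeAlgebra.ι ℤ j)
  | comm (i j : Fin n) (h : i.val + 1 < j.val) (hne : ¬ (i.val = 0 ∧ j.val = 2)) :
      NCDRel n (FreeAlgebra.ι ℤ i * FreeAlgebra.ι ℤ j) (FreeAlgebra.ι ℤ j * FreeAlgebra.ι ℤ i)

/-- The nilCoxeter algebra of the type D Weyl group `W̃_n`. -/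
abbrev NCD (n : ℕ) := RingQuot (NCDRel n)

/-- The generator `u_i` (and `0` for `i ≥ n`). -/
def NCDgen (n : ℕ) (i : ℕ) : NCD n :=
  if h : i < n then RingQuot.mkAlgHom ℤ (NCDRel n) (FreeAlgebra.ι ℤ (⟨i, h⟩ : Fin n)) else 0

/-- Polynomials in two central indeterminates `s`, `t` over the type D nilCoxeter algebra. -/
abbrev NCDP (n : ℕ) := Polynomial (Polynomial (NCD n))

def NCDPu (n : ℕ) (i : ℕ) : NCDP n := Polynomial.C (Polynomial.C (NCDgen n i))

def tvarD (n : ℕ) : NCDP n := Polynomial.X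

def svarD (n : ℕ) : NCDP n := Polynomial.C Polynomial.X

/-- `D(t) = (1+t u_{n-1})⋯(1+t u_2)(1+t u_1)(1+t u_0)(1+t u_2)⋯(1+t u_{n-1})`. -/
def Dop (n : ℕ) (t : NCDP n) : NCDP n :=
  (((List.range (n - 2)).map fun j => 1 + t * NCDPu n (n - 1 - j)).prod) *
    (1 + t * NCDPu n 1) * (1 + t * NCDPu n 0) *
  (((List.range (n - 2)).map fun j => 1 + t * NCDPu n (j + 2)).prod)

/-!
Write `h_i(x) = 1 + x u_i` (`hFactor u i x`) for central `x`. The nilCoxeter relations give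
`h_i(x) h_i(y) = h_i(x + y)`, commutation of `h_i(x)` and `h_j(y)` when `u_i, u_j` commute, and the
Yang–Baxter equation `h_i(x) h_j(x + y) h_i(y) = h_j(y) h_i(x + y) h_j(x)` when they braid.
`D(t)` is the palindromic product (`palindromeProd`) `F_m(t) = h_{m+1}(t) F_{m-1}(t) h_{m+1}(t)`,
`F_0(t) = h_1(t) h_0(t)`, with `m = n - 2`. Yang–Baxter moves prove, by induction on `m`, the
exchange identity
`h_{m+2}(x - y) F_m(x) h_{m+2}(x + y) F_m(y) = F_m(y) h_{m+2}(x + y) F_m(x) h_{m+2}(x - y)`, and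
splitting `h_{m+2}(x) = h_{m+2}(y) h_{m+2}(x - y)` turns it into
`F_{m+1}(x) F_{m+1}(y) = F_{m+1}(y) F_{m+1}(x)`.
-/

section NilCoxeterD

variable {A : Type*} [Ring A]

structure IsNilCoxeterD (u : ℕ → A) : Prop where
  mul_self : ∀ i, u i * u i = 0
  commute_zero_one : Commute (u 0) (u 1)
  braid_zero_two : u 0 * u 2 * u 0 = u 2 * u 0 * u 2
  braid : ∀ i, 1 ≤ i → u i * u (i + 1) * u i = u (i + 1) * u i * u (i + 1)
  commute : ∀ i j, i + 1 < j → ¬(i = 0 ∧ j = 2) → Commute (u i) (u j)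

theorem IsNilCoxeterD.map {B : Type*} [Ring B] {u : ℕ → A} (hu : IsNilCoxeterD u)
    (f : A →+* B) : IsNilCoxeterD (f ∘ u) where
  mul_self i := by simp only [Function.comp_apply, ← map_mul, hu.mul_self, map_zero]
  commute_zero_one := hu.commute_zero_one.map f
  braid_zero_two := by simp only [Function.comp_apply, ← map_mul, hu.braid_zero_two]
  braid i hi := by simp only [Function.comp_apply, ← map_mul, hu.braid i hi]
  commute i j hij hne := (hu.commute i j hij hne).map f

def hFactor (u : ℕ → A) (i : ℕ) (x : A) : A := 1 + x * u i

variable {u : ℕ → A} {i j : ℕ} {x y : A}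

theorem hFactor_mul_hFactor (hi : u i * u i = 0) (hy : IsMulCentral y) :
    hFactor u i x * hFactor u i y = hFactor u i (x + y) := by
  have hsq : x * u i * (y * u i) = 0 := by
    rw [mul_assoc, ← hy.left_comm, ← mul_assoc, ← mul_assoc, mul_assoc _ (u i), hi, mul_zero]
  simp only [hFactor, mul_add, add_mul, one_mul, mul_one, hsq]
  abel

theorem _root_.Commute.hFactor (hij : Commute (u i) (u j)) (hx : IsMulCentral x)
    (hy : IsMulCentral y) : Commute (hFactor u i x) (hFactor u j y) := by
  rw [commute_iff_eq]
  simp only [Giambelli.hFactor, mul_add, add_mul, one_mul, mul_one, mul_assoc,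
    ← hx.left_comm (u _), ← hy.left_comm (u _), hx.left_comm y, hij.eq]
  abel

theorem hFactor_yangBaxter (hi : u i * u i = 0) (hj : u j * u j = 0)
    (hbr : u i * u j * u i = u j * u i * u j) (hx : IsMulCentral x) (hy : IsMulCentral y) :
    hFactor u i x * hFactor u j (x + y) * hFactor u i y
      = hFactor u j y * hFactor u i (x + y) * hFactor u j x := by
  rw [mul_assoc] at hbr
  simp only [hFactor, mul_add, add_mul, one_mul, mul_one, mul_assoc,
    ← hx.left_comm (u _), ← hy.left_comm (u _), hx.left_comm y, hi, hj, hbr,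
    mul_zero, add_zero]
  abel

-- The `_assoc` forms, with an arbitrary right factor `r`, make each step of the calculations below
-- a single `rw` on right-associated products.
theorem hFactor_mul_hFactor_assoc (hi : u i * u i = 0) (hy : IsMulCentral y) {z : A}
    (hz : x + y = z) (r : A) : hFactor u i x * (hFactor u i y * r) = hFactor u i z * r := by
  rw [← mul_assoc, hFactor_mul_hFactor hi hy, hz]

theorem commute_hFactor_hFactor (hi : u i * u i = 0) (hx : IsMulCentral x) (hy : IsMulCentral y) :
    Commute (hFactor u i x) (hFactor u i y) := by
  rw [commute_iff_eq, hFactor_mul_hFactor hi hy, hFactor_mul_hFactor hi hx, add_comm]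

def palindromeProd (u : ℕ → A) (x : A) : ℕ → A
  | 0 => hFactor u 1 x * hFactor u 0 x
  | m + 1 => hFactor u (m + 2) x * palindromeProd u x m * hFactor u (m + 2) x

theorem palindromeProd_zero_mul (r : A) :
    palindromeProd u x 0 * r = hFactor u 1 x * (hFactor u 0 x * r) :=
  mul_assoc _ _ _

theorem palindromeProd_succ_mul (m : ℕ) (r : A) :
    palindromeProd u x (m + 1) * r
      = hFactor u (m + 2) x * (palindromeProd u x m * (hFactor u (m + 2) x * r)) := by
  simp only [palindromeProd, mul_assoc]

theorem palindromeProd_eq_prod (m : ℕ) :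
    palindromeProd u x m = ((List.range' 2 m).reverse.map (hFactor u · x)).prod *
      (hFactor u 1 x * hFactor u 0 x) * ((List.range' 2 m).map (hFactor u · x)).prod := by
  induction m with
  | zero => simp [palindromeProd]
  | succ m ih =>
    simp only [palindromeProd, ih, List.range'_concat, List.reverse_append, List.map_append,
      List.prod_append, List.reverse_singleton, List.map_singleton, List.prod_singleton, one_mul,
      mul_assoc]
    rw [add_comm 2 m]

namespace IsNilCoxeterD

variable (hu : IsNilCoxeterD u)
include hu

theorem hFactor_yangBaxter_assoc (hbr : u i * u j * u i = u j * u i * u j)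
    (hx : IsMulCentral x) (hy : IsMulCentral y) {z : A} (hz : x + y = z) (r : A) :
    hFactor u i x * (hFactor u j z * (hFactor u i y * r))
      = hFactor u j y * (hFactor u i z * (hFactor u j x * r)) := by
  subst hz
  simp only [← mul_assoc, hFactor_yangBaxter (hu.mul_self i) (hu.mul_self j) hbr hx hy]

theorem commute_hFactor_palindromeProd (hy : IsMulCentral y) (hx : IsMulCentral x) :
    ∀ m, m + 2 < j → Commute (hFactor u j y) (palindromeProd u x m)
  | 0, hj => ((hu.commute 1 j (by omega) (by omega)).symm.hFactor hy hx).mul_right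
      ((hu.commute 0 j (by omega) (by omega)).symm.hFactor hy hx)
  | m + 1, hj => by
    have hc := (hu.commute (m + 2) j (by omega) (by omega)).symm.hFactor hy hx
    exact (hc.mul_right (commute_hFactor_palindromeProd hy hx m (by omega))).mul_right hc

theorem palindromeProd_exchange_zero (hx : IsMulCentral x) (hy : IsMulCentral y) (r : A) :
    hFactor u 2 (x - y) * (palindromeProd u x 0 *
      (hFactor u 2 (x + y) * (palindromeProd u y 0 * r)))
    = palindromeProd u y 0 * (hFactor u 2 (x + y) *
      (palindromeProd u x 0 * (hFactor u 2 (x - y) * r))) := by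
  have hd : IsMulCentral (x - y) := (Subring.center A).sub_mem hx hy
  have hdy : x - y + y = x := sub_add_cancel x y
  have br12 := hu.braid 1 le_rfl
  have br02 := hu.braid_zero_two
  have c01 := hu.commute_zero_one
  calc hFactor u 2 (x - y) * (palindromeProd u x 0 *
        (hFactor u 2 (x + y) * (palindromeProd u y 0 * r)))
      = hFactor u 2 (x - y) * (hFactor u 1 x * (hFactor u 0 x * (hFactor u 2 (x + y) *
          (hFactor u 1 y * (hFactor u 0 y * r))))) := by
        rw [palindromeProd_zero_mul, palindromeProd_zero_mul]
    _ = hFactor u 2 (x - y) * (hFactor u 0 x * (hFactor u 1 x * (hFactor u 2 (x + y) *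
          (hFactor u 1 y * (hFactor u 0 y * r))))) := by
        rw [(c01.symm.hFactor hx hx).left_comm]
    _ = hFactor u 2 (x - y) * (hFactor u 0 x * (hFactor u 2 y * (hFactor u 1 (x + y) *
          (hFactor u 2 x * (hFactor u 0 y * r))))) := by
        rw [hu.hFactor_yangBaxter_assoc br12 hx hy rfl]
    _ = hFactor u 0 y * (hFactor u 2 x * (hFactor u 0 (x - y) * (hFactor u 1 (x + y) *
          (hFactor u 2 x * (hFactor u 0 y * r))))) := by
        rw [hu.hFactor_yangBaxter_assoc br02.symm hd hy hdy]
    _ = hFactor u 0 y * (hFactor u 2 x * (hFactor u 1 (x + y) * (hFactor u 0 (x - y) *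
          (hFactor u 2 x * (hFactor u 0 y * r))))) := by
        rw [(c01.hFactor hd (Set.add_mem_center hx hy)).left_comm]
    _ = hFactor u 0 y * (hFactor u 2 x * (hFactor u 1 (x + y) * (hFactor u 2 y *
          (hFactor u 0 x * (hFactor u 2 (x - y) * r))))) := by
        rw [hu.hFactor_yangBaxter_assoc br02 hd hy hdy]
    _ = hFactor u 0 y * (hFactor u 1 y * (hFactor u 2 (x + y) * (hFactor u 1 x *
          (hFactor u 0 x * (hFactor u 2 (x - y) * r))))) := by
        rw [hu.hFactor_yangBaxter_assoc br12.symm hx hy rfl]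
    _ = hFactor u 1 y * (hFactor u 0 y * (hFactor u 2 (x + y) * (hFactor u 1 x *
          (hFactor u 0 x * (hFactor u 2 (x - y) * r))))) := by
        rw [(c01.hFactor hy hy).left_comm]
    _ = palindromeProd u y 0 * (hFactor u 2 (x + y) *
          (palindromeProd u x 0 * (hFactor u 2 (x - y) * r))) := by
        rw [palindromeProd_zero_mul, palindromeProd_zero_mul]

theorem palindromeProd_exchange (hx : IsMulCentral x) (hy : IsMulCentral y) (m : ℕ) (r : A) :
    hFactor u (m + 2) (x - y) * (palindromeProd u x m *
      (hFactor u (m + 2) (x + y) * (palindromeProd u y m * r)))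
    = palindromeProd u y m * (hFactor u (m + 2) (x + y) *
      (palindromeProd u x m * (hFactor u (m + 2) (x - y) * r))) := by
  induction m generalizing r with
  | zero => exact hu.palindromeProd_exchange_zero hx hy r
  | succ m ih =>
    have hd : IsMulCentral (x - y) := (Subring.center A).sub_mem hx hy
    have hdy : x - y + y = x := sub_add_cancel x y
    have br : u (m + 2) * u (m + 3) * u (m + 2) = u (m + 3) * u (m + 2) * u (m + 3) :=
      hu.braid (m + 2) (by omega)
    have cyx := hu.commute_hFactor_palindromeProd hy hx m (j := m + 3) (by omega)
    have cxy := hu.commute_hFactor_palindromeProd hx hy m (j := m + 3) (by omega)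
    calc hFactor u (m + 3) (x - y) * (palindromeProd u x (m + 1) *
          (hFactor u (m + 3) (x + y) * (palindromeProd u y (m + 1) * r)))
        = hFactor u (m + 3) (x - y) * (hFactor u (m + 2) x * (palindromeProd u x m *
            (hFactor u (m + 2) x * (hFactor u (m + 3) (x + y) * (hFactor u (m + 2) y *
            (palindromeProd u y m * (hFactor u (m + 2) y * r))))))) := by
          rw [palindromeProd_succ_mul, palindromeProd_succ_mul]
      _ = hFactor u (m + 3) (x - y) * (hFactor u (m + 2) x * (palindromeProd u x m *
            (hFactor u (m + 3) y * (hFactor u (m + 2) (x + y) * (hFactor u (m + 3) x *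
            (palindromeProd u y m * (hFactor u (m + 2) y * r))))))) := by
          rw [hu.hFactor_yangBaxter_assoc br hx hy rfl]
      _ = hFactor u (m + 3) (x - y) * (hFactor u (m + 2) x * (hFactor u (m + 3) y *
            (palindromeProd u x m * (hFactor u (m + 2) (x + y) * (palindromeProd u y m *
            (hFactor u (m + 3) x * (hFactor u (m + 2) y * r))))))) := by
          rw [cyx.symm.left_comm, cxy.left_comm]
      _ = hFactor u (m + 2) y * (hFactor u (m + 3) x * (hFactor u (m + 2) (x - y) *
            (palindromeProd u x m * (hFactor u (m + 2) (x + y) * (palindromeProd u y m *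
            (hFactor u (m + 3) x * (hFactor u (m + 2) y * r))))))) := by
          rw [hu.hFactor_yangBaxter_assoc br.symm hd hy hdy]
      _ = hFactor u (m + 2) y * (hFactor u (m + 3) x * (palindromeProd u y m *
            (hFactor u (m + 2) (x + y) * (palindromeProd u x m * (hFactor u (m + 2) (x - y) *
            (hFactor u (m + 3) x * (hFactor u (m + 2) y * r))))))) := by
          rw [ih]
      _ = hFactor u (m + 2) y * (palindromeProd u y m * (hFactor u (m + 3) x *
            (hFactor u (m + 2) (x + y) * (palindromeProd u x m * (hFactor u (m + 3) y *
            (hFactor u (m + 2) x * (hFactor u (m + 3) (x - y) * r))))))) := by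
          rw [cxy.left_comm, hu.hFactor_yangBaxter_assoc br hd hy hdy]
      _ = hFactor u (m + 2) y * (palindromeProd u y m * (hFactor u (m + 2) y *
            (hFactor u (m + 3) (x + y) * (hFactor u (m + 2) x * (palindromeProd u x m *
            (hFactor u (m + 2) x * (hFactor u (m + 3) (x - y) * r))))))) := by
          rw [cyx.symm.left_comm, hu.hFactor_yangBaxter_assoc br.symm hx hy rfl]
      _ = palindromeProd u y (m + 1) * (hFactor u (m + 3) (x + y) *
            (palindromeProd u x (m + 1) * (hFactor u (m + 3) (x - y) * r))) := by
          rw [palindromeProd_succ_mul, palindromeProd_succ_mul]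

theorem commute_palindromeProd (hx : IsMulCentral x) (hy : IsMulCentral y) (m : ℕ) :
    Commute (palindromeProd u x m) (palindromeProd u y m) := by
  cases m with
  | zero =>
    have c01 := hu.commute_zero_one
    exact ((commute_hFactor_hFactor (hu.mul_self 1) hx hy).mul_right
        (c01.symm.hFactor hx hy)).mul_left
      ((c01.hFactor hx hy).mul_right (commute_hFactor_hFactor (hu.mul_self 0) hx hy))
  | succ m =>
    have hd : IsMulCentral (x - y) := (Subring.center A).sub_mem hx hy
    have hsq := hu.mul_self (m + 2)
    suffices ∀ r, palindromeProd u x (m + 1) * (palindromeProd u y (m + 1) * r)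
        = palindromeProd u y (m + 1) * (palindromeProd u x (m + 1) * r) by
      simpa only [commute_iff_eq, mul_one] using this 1
    intro r
    calc palindromeProd u x (m + 1) * (palindromeProd u y (m + 1) * r)
        = hFactor u (m + 2) x * (palindromeProd u x m * (hFactor u (m + 2) x *
            (hFactor u (m + 2) y * (palindromeProd u y m * (hFactor u (m + 2) y * r))))) := by
          rw [palindromeProd_succ_mul, palindromeProd_succ_mul]
      _ = hFactor u (m + 2) y * (hFactor u (m + 2) (x - y) * (palindromeProd u x m *
            (hFactor u (m + 2) (x + y) * (palindromeProd u y m * (hFactor u (m + 2) y * r))))) := by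
          rw [hFactor_mul_hFactor_assoc hsq hy rfl,
            hFactor_mul_hFactor_assoc hsq hd (add_sub_cancel y x)]
      _ = hFactor u (m + 2) y * (palindromeProd u y m * (hFactor u (m + 2) (x + y) *
            (palindromeProd u x m * (hFactor u (m + 2) (x - y) * (hFactor u (m + 2) y * r))))) := by
          rw [hu.palindromeProd_exchange hx hy]
      _ = palindromeProd u y (m + 1) * (palindromeProd u x (m + 1) * r) := by
          rw [palindromeProd_succ_mul, palindromeProd_succ_mul,
            hFactor_mul_hFactor_assoc hsq hy (sub_add_cancel x y),
            hFactor_mul_hFactor_assoc hsq hx (add_comm y x)]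

end IsNilCoxeterD

end NilCoxeterD

theorem _root_.Polynomial.isMulCentral_C {R : Type*} [Semiring R] {a : R} (ha : IsMulCentral a) :
    IsMulCentral (Polynomial.C a) :=
  Semigroup.mem_center_iff.2 fun p => by
    ext k
    rw [Polynomial.coeff_mul_C, Polynomial.coeff_C_mul, (ha.comm _).eq]

theorem _root_.Polynomial.isMulCentral_X {R : Type*} [Semiring R] :
    IsMulCentral (Polynomial.X : Polynomial R) :=
  Semigroup.mem_center_iff.2 fun p => (Polynomial.commute_X p).eq.symm

variable {n : ℕ}

theorem NCDgen_of_lt {i : ℕ} (hi : i < n) :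
    NCDgen n i = RingQuot.mkAlgHom ℤ (NCDRel n) (FreeAlgebra.ι ℤ ⟨i, hi⟩) :=
  dif_pos hi

theorem NCDgen_of_le {i : ℕ} (hi : n ≤ i) : NCDgen n i = 0 :=
  dif_neg (by omega)

theorem isNilCoxeterD_NCDgen (n : ℕ) : IsNilCoxeterD (NCDgen n) where
  mul_self i := by
    rcases lt_or_ge i n with hi | hi
    · rw [NCDgen_of_lt hi, ← map_mul, RingQuot.mkAlgHom_rel ℤ (NCDRel.sq _), map_zero]
    · rw [NCDgen_of_le hi, mul_zero]
  commute_zero_one := by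
    rcases lt_or_ge 1 n with h | h
    · rw [NCDgen_of_lt h, NCDgen_of_lt (by omega : 0 < n), commute_iff_eq, ← map_mul,
        ← map_mul,
        RingQuot.mkAlgHom_rel ℤ (NCDRel.comm01 _ _ rfl rfl)]
    · rw [NCDgen_of_le h]
      exact Commute.zero_right _
  braid_zero_two := by
    rcases lt_or_ge 2 n with h | h
    · simp only [NCDgen_of_lt h, NCDgen_of_lt (by omega : 0 < n), ← map_mul,
        RingQuot.mkAlgHom_rel ℤ (NCDRel.d02 ⟨0, _⟩ ⟨2, h⟩ rfl rfl)]
    · simp only [NCDgen_of_le h, mul_zero, zero_mul]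
  braid i hi := by
    rcases lt_or_ge (i + 1) n with h | h
    · simp only [NCDgen_of_lt h, NCDgen_of_lt (by omega : i < n), ← map_mul,
        RingQuot.mkAlgHom_rel ℤ (NCDRel.braid ⟨i, _⟩ ⟨i + 1, h⟩ hi rfl)]
    · simp only [NCDgen_of_le h, mul_zero, zero_mul]
  commute i j hij hne := by
    rcases lt_or_ge j n with h | h
    · rw [NCDgen_of_lt h, NCDgen_of_lt (by omega : i < n), commute_iff_eq, ← map_mul,
        ← map_mul,
        RingQuot.mkAlgHom_rel ℤ (NCDRel.comm ⟨i, _⟩ ⟨j, h⟩ hij hne)]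
    · rw [NCDgen_of_le h]
      exact Commute.zero_right _

-- Instance search does not find this through the nested `Polynomial` and `RingQuot` instances.
instance (n : ℕ) : Ring (NCDP n) := @Polynomial.ring _ Polynomial.ring

theorem isNilCoxeterD_NCDPu (n : ℕ) : IsNilCoxeterD (NCDPu n) :=
  (isNilCoxeterD_NCDgen n).map (Polynomial.C.comp Polynomial.C)

theorem Dop_eq_palindromeProd (t : NCDP n) : Dop n t = palindromeProd (NCDPu n) t (n - 2) := by
  rw [palindromeProd_eq_prod]
  rcases Nat.lt_or_ge n 2 with hn | hn
  · simp [Dop, hFactor, show n - 2 = 0 by omega]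
  · obtain ⟨m, rfl⟩ := Nat.exists_eq_add_of_le' hn
    rw [List.reverse_range', List.range'_eq_map_range]
    simp [Dop, hFactor, mul_assoc, Function.comp_def, add_comm]

theorem Dop_commute (n : ℕ) :
    Dop n (svarD n) * Dop n (tvarD n) = Dop n (tvarD n) * Dop n (svarD n) := by
  rw [Dop_eq_palindromeProd, Dop_eq_palindromeProd]
  exact ((isNilCoxeterD_NCDPu n).commute_palindromeProd
    (Polynomial.isMulCentral_C Polynomial.isMulCentral_X) Polynomial.isMulCentral_X (n - 2)).eq

end Giambelli
end
end
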